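/- arXiv:1403.6044 — 2 statements merged into one kernel-verified Lean document; each statement's English description precedes it below -/
import Mathlib

section
/- Let B be a commutative unital ring, A a unital B-algebra, and suppose A is generated as a B-module by its group of units (more generally, consider the residual algebra spanned by unitaries). Then the map φ : T ↦ T(1 ⊗ 1) from the algebra of A-bimodule endomorphisms of A ⊗_B A generated by the operators u * v : a ⊗ b ↦ a u ⊗ v b (for units u, v of A), to A ⊗_B A, is an injective algebra homomorphism onto the subalgebra A^op ⊗_B A (with multiplication (u ⊗ v)(u' ⊗ v') = u'u ⊗ vv'), i.e. the fiber square A *_B A is isomorphic to A^op ⊗_B A when B is central. -/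
open TensorProduct

/-- The `A`-bimodular operator `u * v : a ⊗ b ↦ au ⊗ vb` on `A ⊗_B A`. -/
noncomputable def starOp (B : Type*) [CommRing B] (A : Type*) [Ring A] [Algebra B A]
    (u v : A) : Module.End B (A ⊗[B] A) :=
  ((LinearMap.mulRight B u).rTensor A).comp ((LinearMap.mulLeft B v).lTensor A)

/-- The canonical `B`-linear identification `A^op ⊗_B A → A ⊗_B A`. -/
noncomputable def unopTensor (B : Type*) [CommRing B] (A : Type*) [Ring A] [Algebra B A] :
    (Aᵐᵒᵖ ⊗[B] A) →ₗ[B] (A ⊗[B] A) :=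
  TensorProduct.map ((MulOpposite.opLinearEquiv B).symm.toLinearMap) LinearMap.id

/-! Multiplying on the right of the first factor and on the left of the second gives an algebra
map `ψ : Aᵐᵒᵖ ⊗_B A → End_B(A ⊗_B A)` with `ψ (u ⊗ v) = u * v`. Evaluating `ψ x` at `1 ⊗ 1` just
forgets the `ᵐᵒᵖ`, a linear isomorphism, so `ψ` is injective. Since the units span `A`, the
tensors `u ⊗ v` of units span `Aᵐᵒᵖ ⊗_B A`, hence generate it as an algebra, so the image of `ψ`
is the subalgebra generated by the operators `u * v`, i.e. the fiber square. -/

theorem TensorProduct.span_image2_tmul_eq_top {R M N : Type*} [CommSemiring R]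
    [AddCommMonoid M] [Module R M] [AddCommMonoid N] [Module R N] {s : Set M} {t : Set N}
    (hs : Submodule.span R s = ⊤) (ht : Submodule.span R t = ⊤) :
    Submodule.span R (Set.image2 (· ⊗ₜ[R] ·) s t) = ⊤ := by
  simpa [hs, ht] using (Submodule.map₂_span_span R (mk R M N) s t).symm

theorem MulOpposite.span_op_image_eq_top {R M : Type*} [CommSemiring R] [AddCommMonoid M]
    [Module R M] {s : Set M} (hs : Submodule.span R s = ⊤) :
    Submodule.span R (MulOpposite.op '' s) = ⊤ := by
  have h := Submodule.span_image (s := s) (MulOpposite.opLinearEquiv R (M := M)).toLinearMap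
  rwa [hs, Submodule.map_top, LinearEquiv.range] at h

section

variable (R A : Type*) [CommSemiring R] [Semiring A] [Algebra R A]

noncomputable def bimoduleAction : Aᵐᵒᵖ ⊗[R] A →ₐ[R] Module.End R (A ⊗[R] A) :=
  Module.endTensorEndAlgHom.comp
    (Algebra.TensorProduct.map (Algebra.lsmul R R A) (Algebra.lmul R A))

theorem bimoduleAction_tmul (u : Aᵐᵒᵖ) (v : A) :
    bimoduleAction R A (u ⊗ₜ v) =
      TensorProduct.map (LinearMap.mulRight R u.unop) (LinearMap.mulLeft R v) := rfl

end

section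

variable (B A : Type*) [CommRing B] [Ring A] [Algebra B A]

theorem bimoduleAction_op_tmul (u v : A) :
    bimoduleAction B A (MulOpposite.op u ⊗ₜ v) = starOp B A u v := by
  rw [bimoduleAction_tmul, starOp, LinearMap.rTensor_comp_lTensor]
  rfl

theorem bimoduleAction_apply_one_tmul_one (x : Aᵐᵒᵖ ⊗[B] A) :
    bimoduleAction B A x (1 ⊗ₜ 1) = unopTensor B A x := by
  induction x with
  | zero => simp
  | tmul u v => simp [bimoduleAction_tmul, unopTensor]
  | add x y hx hy => simp only [map_add, LinearMap.add_apply, hx, hy]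

theorem unopTensor_injective : Function.Injective (unopTensor B A) :=
  (TensorProduct.congr (MulOpposite.opLinearEquiv B).symm (LinearEquiv.refl B A)).injective

theorem bimoduleAction_injective : Function.Injective (bimoduleAction B A) := fun x y h => by
  apply unopTensor_injective B A
  rw [← bimoduleAction_apply_one_tmul_one, ← bimoduleAction_apply_one_tmul_one, h]

theorem range_bimoduleAction (hgen : Submodule.span B {a : A | IsUnit a} = ⊤) :
    (bimoduleAction B A).range =
      Algebra.adjoin B {T | ∃ u v : Aˣ, T = starOp B A (u : A) (v : A)} := by
  have hspan := TensorProduct.span_image2_tmul_eq_top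
    (MulOpposite.span_op_image_eq_top hgen) hgen
  have hadjoin : Algebra.adjoin B (Set.image2 (· ⊗ₜ[B] ·)
      (MulOpposite.op '' {a : A | IsUnit a}) {a : A | IsUnit a}) = ⊤ :=
    top_le_iff.mp (hspan.ge.trans (Algebra.span_le_adjoin B _))
  rw [← Algebra.map_top, ← hadjoin, AlgHom.map_adjoin]
  congr 1
  ext T
  simp [Set.image_image2, Set.image2_image_left, bimoduleAction_op_tmul, IsUnit, eq_comm]

end

/-- For a central extension `A/B` (`B` commutative) with `A` spanned as a
`B`-module by its units, the evaluation `φ : T ↦ T(1 ⊗ 1)` identifies the fiber square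
`A *_B A` — the algebra of `A`-bimodule endomorphisms of `A ⊗_B A` generated by the
operators `u * v` for units `u, v` — with `A^op ⊗_B A` (so `φ` is an injective algebra
homomorphism onto `A^op ⊗_B A` with its multiplication `(u ⊗ v)(u' ⊗ v') = u'u ⊗ vv'`). -/
theorem stmt2 (B : Type) [CommRing B] (A : Type) [Ring A] [Algebra B A]
    (hgen : Submodule.span B {a : A | IsUnit a} = ⊤)
    (FS : Subalgebra B (Module.End B (A ⊗[B] A)))
    (hFS : FS = Algebra.adjoin B
      {T : Module.End B (A ⊗[B] A) | ∃ u v : Aˣ, T = starOp B A (u : A) (v : A)}) :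
    ∃ e : FS ≃+* (Aᵐᵒᵖ ⊗[B] A),
      (∀ (b : B) (T : FS), e ((algebraMap B FS b) * T) = (algebraMap B (Aᵐᵒᵖ ⊗[B] A) b) * e T)
      ∧ ∀ T : FS, unopTensor B A (e T)
          = T.1 ((1 : A) ⊗ₜ[B] (1 : A)) := by
  let E : (Aᵐᵒᵖ ⊗[B] A) ≃ₐ[B] FS :=
    (AlgEquiv.ofInjective _ (bimoduleAction_injective B A)).trans
      (Subalgebra.equivOfEq _ _ ((range_bimoduleAction B A hgen).trans hFS.symm))
  refine ⟨E.symm.toRingEquiv, fun b T => ?_, fun T => ?_⟩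
  · simp only [AlgEquiv.coe_ringEquiv, map_mul, AlgEquiv.commutes]
  · have hT : bimoduleAction B A (E.symm T) = T.1 := congrArg Subtype.val (E.apply_symm_apply T)
    rw [← hT, bimoduleAction_apply_one_tmul_one]
    rfl
end

section
/- Let G be a groupoid and define ξ_n : G^e ⋆ E^{n-1}G → Z^n G by ξ_n((α,β), (α_1,…,α_n-tuple ω)) = (α,β)·θ_n(1, ω) (with θ as in the classifying-to-cyclic map). Then ξ_n is a bijection, with inverse ω = (α_{n+1}, α_0, α_1, …, α_n) ↦ (φ_n(ω), ψ_n(ω)) where φ_n(ω) = (α_1 ⋯ α_{n+1}, α_0) ∈ G^e and ψ_n(ω) = (α_1, α_1α_2, …, α_1⋯α_n) ∈ E^{n-1}G (targets all equal). -/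
/-- A discrete groupoid presented algebraically: arrows `Γ` over objects `X`, with
source `s`, target `t`, a (total) product `mul` which is only required to behave on
composable pairs (`s α = t β`), inversion and units. -/
structure DGroupoid (X : Type*) (Γ : Type*) where
  s : Γ → X
  t : Γ → X
  mul : Γ → Γ → Γ
  inv : Γ → Γ
  unit : X → Γ
  s_inv : ∀ α, s (inv α) = t α
  t_inv : ∀ α, t (inv α) = s α
  s_mul : ∀ α β, s α = t β → s (mul α β) = s β
  t_mul : ∀ α β, s α = t β → t (mul α β) = t α
  mul_assoc' : ∀ α β γ, s α = t β → s β = t γ → mul (mul α β) γ = mul α (mul β γ)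
  s_unit : ∀ x, s (unit x) = x
  t_unit : ∀ x, t (unit x) = x
  mul_unit : ∀ α, mul α (unit (s α)) = α
  unit_mul : ∀ α, mul (unit (t α)) α = α
  mul_inv : ∀ α, mul α (inv α) = unit (t α)
  inv_mul : ∀ α, mul (inv α) α = unit (s α)

/-- `θ_n(α_0,…,α_n) = (α_n⁻¹, α_0, α_0⁻¹α_1, …, α_{n-1}⁻¹α_n)` from `E^nG` to `Z^nG`. -/
def DGroupoid.theta {X Γ : Type*} (G : DGroupoid X Γ) {n : ℕ}
    (f : Fin (n + 1) → Γ) : Fin (n + 2) → Γ :=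
  fun k =>
    if (k : ℕ) = 0 then G.inv (f (Fin.last n))
    else if (k : ℕ) = 1 then f 0
    else G.mul (G.inv (f ⟨(k : ℕ) - 2, by have := k.isLt; omega⟩))
      (f ⟨(k : ℕ) - 1, by have := k.isLt; omega⟩)

/-- `ξ_n((α,β), ω) = (α,β)·θ_n(1,ω)` from `G^e ⋆ E^{n-1}G` to `Z^nG`, where `1` is the
unit at the common target `t(α)` of `ω` and `(α,β) ∈ G^e` acts by
`(α,β)·(β_0,β_1,β_2,…) = (β_0α, ββ_1, β_2, …)`. -/
def DGroupoid.xi {X Γ : Type*} (G : DGroupoid X Γ) (n : ℕ) (α β : Γ)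
    (ω : Fin n → Γ) : Fin (n + 2) → Γ :=
  fun k =>
    if (k : ℕ) = 0 then G.mul (G.theta (Fin.cons (G.unit (G.t α)) ω) k) α
    else if (k : ℕ) = 1 then G.mul β (G.theta (Fin.cons (G.unit (G.t α)) ω) k)
    else G.theta (Fin.cons (G.unit (G.t α)) ω) k

open Fin.NatCast in
/-- For a cyclic tuple `g = (α_{n+1}, α_0, α_1, …, α_n) ∈ Z^nG` (so `α_i = g (i+1)`
cyclically), `prods g j = α_1 α_2 ⋯ α_j` is the partial product (with `prods g 0` the
unit at `t(α_1)`). -/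
def DGroupoid.prods {X Γ : Type*} (G : DGroupoid X Γ) (n : ℕ)
    (g : Fin (n + 2) → Γ) : ℕ → Γ
  | 0 => G.unit (G.t (g ((2 : ℕ) : Fin (n + 2))))
  | j + 1 => G.mul (G.prods n g j) (g (((j + 2 : ℕ) : Fin (n + 2))))

/-!
`ξ_n` is the `G^e`-action `(α,β)·(β_0,β_1,β_2,…) = (β_0α, ββ_1, β_2, …)` applied to
`θ_n(1,ω)`, and both `θ_n` and this action preserve cyclic composability. Since the entries of
`θ_n(1,ω)` past the first two are the quotients `ω_{j-1}⁻¹ω_j`, the partial products of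
`ξ_n((α,β),ω)` telescope back to `(1,ω)` and finally to `α`. Conversely, for a cyclic tuple the
quotients of consecutive partial products `α_1⋯α_j` are its entries, which gives `ξ_n ∘ (φ_n, ψ_n) = id`.
-/

namespace DGroupoid

variable {X Γ : Type*} (G : DGroupoid X Γ)

theorem inv_mul_cancel_left {x y : Γ} (h : G.s x = G.t y) :
    G.mul (G.inv x) (G.mul x y) = y := by
  rw [← G.mul_assoc' _ _ _ (G.s_inv x) h, G.inv_mul, h, G.unit_mul]

theorem mul_inv_cancel_left {x y : Γ} (h : G.t x = G.t y) :
    G.mul x (G.mul (G.inv x) y) = y := by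
  rw [← G.mul_assoc' _ _ _ (G.t_inv x).symm (by rw [G.s_inv, h]), G.mul_inv, h, G.unit_mul]

/-- `g ∈ Z^{m-2}G`. -/
def IsCyclic {m : ℕ} [NeZero m] (g : Fin m → Γ) : Prop :=
  ∀ k, G.s (g k) = G.t (g (k + 1))

theorem isCyclic_of_castSucc {m : ℕ} {g : Fin (m + 1) → Γ}
    (hlast : G.s (g (Fin.last m)) = G.t (g 0))
    (hsucc : ∀ i : Fin m, G.s (g i.castSucc) = G.t (g i.succ)) : G.IsCyclic g := by
  intro k
  induction k using Fin.lastCases with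
  | last => rwa [Fin.last_add_one]
  | cast i => rw [Fin.coeSucc_eq_succ]; exact hsucc i

theorem t_cons_unit {n : ℕ} {x : X} {ω : Fin n → Γ} (hω : ∀ i, G.t (ω i) = x)
    (j : Fin (n + 1)) : G.t ((Fin.cons (G.unit x) ω : Fin (n + 1) → Γ) j) = x := by
  induction j using Fin.cases with
  | zero => exact G.t_unit x
  | succ i => exact hω i

section Theta

variable {n : ℕ} (f : Fin (n + 1) → Γ)

@[simp]
theorem theta_zero : G.theta f 0 = G.inv (f (Fin.last n)) := rfl

@[simp]
theorem theta_one : G.theta f 1 = f 0 := by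
  simp [theta]

@[simp]
theorem theta_succ_succ (i : Fin n) :
    G.theta f i.succ.succ = G.mul (G.inv (f i.castSucc)) (f i.succ) :=
  (if_neg (by simp)).trans (if_neg (by simp))

theorem s_theta_succ {x : X} (hf : ∀ i, G.t (f i) = x) (i : Fin (n + 1)) :
    G.s (G.theta f i.succ) = G.s (f i) := by
  induction i using Fin.cases with
  | zero => rw [Fin.succ_zero_eq_one, theta_one]
  | succ j => rw [theta_succ_succ, G.s_mul _ _ (by rw [G.s_inv, hf, hf])]

theorem isCyclic_theta {x : X} (hf : ∀ i, G.t (f i) = x) : G.IsCyclic (G.theta f) := by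
  refine G.isCyclic_of_castSucc ?_ fun i => ?_
  · rw [← Fin.succ_last, G.s_theta_succ f hf, theta_zero, G.t_inv]
  · induction i using Fin.cases with
    | zero => rw [Fin.castSucc_zero, theta_zero, Fin.succ_zero_eq_one, theta_one, G.s_inv, hf, hf]
    | succ j =>
      rw [← Fin.succ_castSucc, G.s_theta_succ f hf, theta_succ_succ,
        G.t_mul _ _ (by rw [G.s_inv, hf, hf]), G.t_inv]

end Theta

section EnvAct

variable {n : ℕ} (α β : Γ) (g : Fin (n + 2) → Γ)

/-- The action of `(α,β) ∈ G^e` on `Z^nG`. -/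
def envAct : Fin (n + 2) → Γ :=
  fun k =>
    if (k : ℕ) = 0 then G.mul (g k) α
    else if (k : ℕ) = 1 then G.mul β (g k)
    else g k

theorem xi_eq_envAct (ω : Fin n → Γ) :
    G.xi n α β ω = G.envAct α β (G.theta (Fin.cons (G.unit (G.t α)) ω)) := rfl

@[simp]
theorem envAct_zero : G.envAct α β g 0 = G.mul (g 0) α := rfl

@[simp]
theorem envAct_one : G.envAct α β g 1 = G.mul β (g 1) := by
  simp [envAct]

theorem envAct_of_ne {k : Fin (n + 2)} (h0 : k ≠ 0) (h1 : k ≠ 1) : G.envAct α β g k = g k := by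
  have h1' : (k : ℕ) ≠ 1 := fun h => h1 (Fin.ext (by simp [h]))
  simp [envAct, Fin.val_eq_zero_iff, h0, h1']

@[simp]
theorem envAct_succ_succ (i : Fin n) : G.envAct α β g i.succ.succ = g i.succ.succ := by
  simp [envAct]

theorem isCyclic_envAct (hg : G.IsCyclic g) (hαβ : G.s α = G.t β)
    (hα : G.s (g 0) = G.t α) (hβ : G.s β = G.t (g 1)) : G.IsCyclic (G.envAct α β g) := by
  have hs : ∀ k, k ≠ 0 → G.s (G.envAct α β g k) = G.s (g k) := fun k h0 => by
    by_cases h1 : k = 1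
    · rw [h1, envAct_one, G.s_mul _ _ hβ]
    · rw [G.envAct_of_ne α β g h0 h1]
  have ht : ∀ k, k ≠ 1 → G.t (G.envAct α β g k) = G.t (g k) := fun k h1 => by
    by_cases h0 : k = 0
    · rw [h0, envAct_zero, G.t_mul _ _ hα]
    · rw [G.envAct_of_ne α β g h0 h1]
  intro k
  by_cases h0 : k = 0
  · rw [h0, zero_add, envAct_zero, envAct_one, G.s_mul _ _ hα, G.t_mul _ _ hβ, hαβ]
  · rw [hs k h0, ht (k + 1) (by simpa using h0)]
    exact hg k

end EnvAct

section Xi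

variable {n : ℕ}

theorem isCyclic_xi {α β : Γ} {ω : Fin n → Γ} (hs : G.s α = G.t β) (ht : G.t α = G.s β)
    (hω : ∀ i, G.t (ω i) = G.t α) : G.IsCyclic (G.xi n α β ω) := by
  rw [xi_eq_envAct]
  refine G.isCyclic_envAct _ _ _ (G.isCyclic_theta _ (G.t_cons_unit hω)) hs ?_ ?_
  · rw [theta_zero, G.s_inv, G.t_cons_unit hω]
  · rw [theta_one, G.t_cons_unit hω, ht]

theorem xi_one {α β : Γ} (ω : Fin n → Γ) (ht : G.t α = G.s β) : G.xi n α β ω 1 = β := by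
  rw [xi_eq_envAct, envAct_one, theta_one, Fin.cons_zero, ht, G.mul_unit]

end Xi

section Prods

open Fin.NatCast

variable {n : ℕ} {g : Fin (n + 2) → Γ}

theorem prods_zero_of_isCyclic (hg : G.IsCyclic g) : G.prods n g 0 = G.unit (G.s (g 1)) := by
  rw [prods, hg 1, Nat.cast_ofNat, one_add_one_eq_two]

theorem s_prods (hg : G.IsCyclic g) (j : ℕ) :
    G.s (G.prods n g j) = G.s (g ((j + 1 : ℕ) : Fin (n + 2))) := by
  induction j with
  | zero => rw [G.prods_zero_of_isCyclic hg, G.s_unit, zero_add, Nat.cast_one]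
  | succ j ih =>
    rw [prods, G.s_mul _ _ (by rw [ih, hg, ← Nat.cast_succ])]

theorem t_prods (hg : G.IsCyclic g) (j : ℕ) : G.t (G.prods n g j) = G.s (g 1) := by
  induction j with
  | zero => rw [G.prods_zero_of_isCyclic hg, G.t_unit]
  | succ j ih =>
    rw [prods, G.t_mul _ _ (by rw [G.s_prods hg, hg, ← Nat.cast_succ]), ih]

theorem natCast_add_two (i : Fin n) : (((i : ℕ) + 2 : ℕ) : Fin (n + 2)) = i.succ.succ := by
  ext
  simp only [Fin.val_natCast, Fin.val_succ]
  exact Nat.mod_eq_of_lt (by omega)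

theorem prods_xi {α β : Γ} {ω : Fin n → Γ} (ht : G.t α = G.s β)
    (hω : ∀ i, G.t (ω i) = G.t α) (hxi : G.IsCyclic (G.xi n α β ω)) (j : Fin (n + 1)) :
    G.prods n (G.xi n α β ω) j = (Fin.cons (G.unit (G.t α)) ω : Fin (n + 1) → Γ) j := by
  induction j using Fin.induction with
  | zero =>
    rw [Fin.val_zero, G.prods_zero_of_isCyclic hxi, xi_eq_envAct, envAct_one, theta_one,
      Fin.cons_zero, G.s_mul _ _ (by rw [G.t_unit, ht]), G.s_unit]
  | succ i ih =>
    rw [Fin.val_castSucc] at ih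
    rw [Fin.val_succ, prods, ih, natCast_add_two, xi_eq_envAct,
      envAct_succ_succ, theta_succ_succ]
    exact G.mul_inv_cancel_left (by rw [G.t_cons_unit hω, G.t_cons_unit hω])

theorem prods_xi_last {α β : Γ} {ω : Fin n → Γ} (ht : G.t α = G.s β)
    (hω : ∀ i, G.t (ω i) = G.t α) (hxi : G.IsCyclic (G.xi n α β ω)) :
    G.prods n (G.xi n α β ω) (n + 1) = α := by
  have hlast := G.prods_xi ht hω hxi (Fin.last n)
  rw [Fin.val_last] at hlast
  rw [prods, hlast, Fin.natCast_self, xi_eq_envAct, envAct_zero, theta_zero]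
  exact G.mul_inv_cancel_left (G.t_cons_unit hω _)

theorem inv_prods_mul_prods_succ (hg : G.IsCyclic g) (j : ℕ) :
    G.mul (G.inv (G.prods n g j)) (G.prods n g (j + 1)) = g ((j + 2 : ℕ) : Fin (n + 2)) :=
  G.inv_mul_cancel_left (by rw [G.s_prods hg, hg, ← Nat.cast_succ])

theorem cons_prods (hg : G.IsCyclic g) :
    (Fin.cons (G.unit (G.t (G.prods n g (n + 1)))) (fun i => G.prods n g ((i : ℕ) + 1)) :
      Fin (n + 1) → Γ) = fun j : Fin (n + 1) => G.prods n g j := by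
  funext j
  induction j using Fin.cases with
  | zero => rw [Fin.cons_zero, G.t_prods hg, Fin.val_zero, G.prods_zero_of_isCyclic hg]
  | succ i => rfl

theorem xi_prods (hg : G.IsCyclic g) :
    G.xi n (G.prods n g (n + 1)) (g 1) (fun i => G.prods n g ((i : ℕ) + 1)) = g := by
  rw [xi_eq_envAct, G.cons_prods hg]
  funext k
  induction k using Fin.cases with
  | zero =>
    rw [envAct_zero, theta_zero, Fin.val_last, G.inv_prods_mul_prods_succ hg, Fin.natCast_self]
  | succ k =>
    induction k using Fin.cases with
    | zero =>
      rw [Fin.succ_zero_eq_one, envAct_one, theta_one, Fin.val_zero,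
        G.prods_zero_of_isCyclic hg, G.mul_unit]
    | succ i =>
      rw [envAct_succ_succ, theta_succ_succ, Fin.val_castSucc, Fin.val_succ,
        G.inv_prods_mul_prods_succ hg, natCast_add_two]

end Prods

end DGroupoid

open Fin.NatCast in
/-- `ξ_n : G^e ⋆ E^{n-1}G → Z^nG` is a bijection, with inverse
`ω = (α_{n+1}, α_0, …, α_n) ↦ (φ_n(ω), ψ_n(ω))` where
`φ_n(ω) = (α_1⋯α_{n+1}, α_0) ∈ G^e` and `ψ_n(ω) = (α_1, α_1α_2, …, α_1⋯α_n) ∈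
E^{n-1}G`. -/
theorem stmt13 {X Γ : Type*} (G : DGroupoid X Γ) (n : ℕ) :
    (∀ (α β : Γ) (ω : Fin n → Γ),
      G.s α = G.t β → G.t α = G.s β → (∀ i, G.t (ω i) = G.t α) →
      (∀ k : Fin (n + 2), G.s (G.xi n α β ω k) = G.t (G.xi n α β ω (k + 1)))
      ∧ G.prods n (G.xi n α β ω) (n + 1) = α
      ∧ G.xi n α β ω 1 = β
      ∧ (∀ i : Fin n, G.prods n (G.xi n α β ω) ((i : ℕ) + 1) = ω i))
    ∧ ∀ g : Fin (n + 2) → Γ,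
      (∀ k : Fin (n + 2), G.s (g k) = G.t (g (k + 1))) →
      G.xi n (G.prods n g (n + 1)) (g 1) (fun i => G.prods n g ((i : ℕ) + 1)) = g := by
  refine ⟨fun α β ω hs ht hω => ?_, fun g hg => G.xi_prods hg⟩
  have hxi := G.isCyclic_xi hs ht hω
  refine ⟨hxi, G.prods_xi_last ht hω hxi, G.xi_one ω ht, fun i => ?_⟩
  simpa using G.prods_xi ht hω hxi i.succ
end
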